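/- arXiv:1810.11234 — 5 statements merged into one kernel-verified Lean document; each statement's English description precedes it below -/
import Mathlib

section
/- For every nonnegative integer a and every integer d, the set E_{a,d} = {n ∈ ℕ : s₂(n+a) - s₂(n) = d} has a natural (asymptotic) density, i.e. the limit μ_a(d) = lim_{N→∞} (1/N)·|E_{a,d} ∩ {0,…,N-1}| exists, where s₂ denotes the binary sum-of-digits function. -/
open Filter

/-- Binary sum-of-digits function. -/
def s2 (n : ℕ) : ℕ := (Nat.digits 2 n).sum

/-- `hasDensity a d x` means the set `E_{a,d} = {n : s₂(n+a) - s₂(n) = d}`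
has asymptotic density `x`. -/
def hasDensity (a : ℕ) (d : ℤ) (x : ℝ) : Prop :=
  Tendsto (fun N : ℕ =>
      (((Finset.range N).filter (fun n => (s2 (n + a) : ℤ) - s2 n = d)).card : ℝ) / N)
    atTop (nhds x)

/-!
If `r = n % 2 ^ m` and `r + a < 2 ^ m`, adding `a` to `n` produces no carry beyond the `m`
lowest binary digits, so `s₂(n + a) - s₂(n) = s₂(r + a) - s₂(r)` depends only on `r`.
Hence `E_{a,d}` lies between two `2 ^ m`-periodic sets which differ only on the at most `a`
residues with `r + a ≥ 2 ^ m`. Periodic sets have a density, so the counting ratios of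
`E_{a,d}` eventually oscillate by at most about `a / 2 ^ m`; letting `m → ∞` they form a
Cauchy sequence.
-/

open Function Topology

theorem Nat.digits_sum_add_base_pow_mul {b m t : ℕ} (hb : 1 < b) (ht : t < b ^ m) (q : ℕ) :
    (Nat.digits b (t + b ^ m * q)).sum = (Nat.digits b t).sum + (Nat.digits b q).sum := by
  rcases q.eq_zero_or_pos with rfl | hq
  · simp
  have hlen := (Nat.digits_length_le_iff hb t).2 ht
  rw [← Nat.add_sub_cancel' hlen, ← Nat.digits_append_zeroes_append_digits hb hq]
  simp

theorem Nat.count_imp_le (p q : ℕ → Prop) [DecidablePred p] [DecidablePred q] (n : ℕ) :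
    Nat.count (fun k => p k → q k) n ≤
      Nat.count (fun k => p k ∧ q k) n + Nat.count (¬ p ·) n := by
  calc _ ≤ Nat.count (fun k => (p k ∧ q k) ∨ ¬ p k) n :=
        Nat.count_mono_left fun k _ h => (em (p k)).imp (fun hp => ⟨hp, h hp⟩) id
    _ ≤ _ := by
        simp only [Nat.count_eq_card_filter_range, Finset.filter_or]
        exact Finset.card_union_le _ _

namespace Function.Periodic

theorem comp_mul_add {α : Type*} {f : ℕ → α} {M : ℕ} (hf : Periodic f M) (K : ℕ) :
    (fun k => f (M * K + k)) = f := by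
  funext k
  rw [add_comm, mul_comm]
  exact hf.nat_mul K k

variable {p : ℕ → Prop} [DecidablePred p] {M : ℕ}

theorem count_mul (hp : Periodic p M) (K : ℕ) : Nat.count p (M * K) = K * Nat.count p M := by
  induction K with
  | zero => simp
  | succ K ih =>
    rw [Nat.mul_succ, Nat.count_add, ih]
    simp only [hp.comp_mul_add, Nat.succ_mul]

theorem count_eq (hp : Periodic p M) (N : ℕ) :
    Nat.count p N = N / M * Nat.count p M + Nat.count p (N % M) := by
  conv_lhs => rw [← Nat.div_add_mod N M, Nat.count_add, hp.count_mul]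
  simp only [hp.comp_mul_add]

theorem abs_count_mul_sub_le (hp : Periodic p M) (N : ℕ) :
    |(Nat.count p N : ℝ) * M - N * Nat.count p M| ≤ M * M := by
  have hcount : (Nat.count p N : ℝ) = (N / M : ℕ) * Nat.count p M + Nat.count p (N % M) := by
    exact_mod_cast hp.count_eq N
  have hN : (N : ℝ) = (N / M : ℕ) * M + (N % M : ℕ) := by
    exact_mod_cast (Nat.div_add_mod' N M).symm
  have hrem : (Nat.count p N : ℝ) * M - N * Nat.count p M
      = Nat.count p (N % M) * M - (N % M : ℕ) * Nat.count p M := by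
    rw [hcount, hN]
    ring
  rw [hrem]
  rcases M.eq_zero_or_pos with rfl | hM
  · simp
  have hr : N % M ≤ M := (Nat.mod_lt N hM).le
  have hcr : Nat.count p (N % M) ≤ M := (Nat.count_le _).trans hr
  have hc : Nat.count p M ≤ M := Nat.count_le _
  apply abs_sub_le_of_nonneg_of_le <;> first | positivity | gcongr

theorem tendsto_count_div (hp : Periodic p M) (hM : 0 < M) :
    Tendsto (fun N => (Nat.count p N : ℝ) / N) atTop (𝓝 (Nat.count p M / M)) := by
  rw [tendsto_iff_norm_sub_tendsto_zero]
  refine squeeze_zero' (Eventually.of_forall fun _ => norm_nonneg _) ?_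
    (tendsto_const_div_atTop_nhds_zero_nat (M : ℝ))
  filter_upwards [eventually_gt_atTop 0] with N hN
  have hM' : (0 : ℝ) < M := by exact_mod_cast hM
  have hN' : (0 : ℝ) < N := by exact_mod_cast hN
  rw [Real.norm_eq_abs, div_sub_div _ _ hN'.ne' hM'.ne', abs_div, abs_of_pos (mul_pos hN' hM'),
    div_le_div_iff₀ (mul_pos hN' hM') hN']
  nlinarith [hp.abs_count_mul_sub_le N]

end Function.Periodic

theorem Nat.exists_tendsto_count_div_of_periodic_squeeze {p : ℕ → Prop} [DecidablePred p]
    {lo hi : ℕ → ℕ → Prop} [∀ m, DecidablePred (lo m)] [∀ m, DecidablePred (hi m)]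
    {M : ℕ → ℕ}
    (hM : ∀ m, 0 < M m) (hlo : ∀ m, Periodic (lo m) (M m)) (hhi : ∀ m, Periodic (hi m) (M m))
    (hlop : ∀ m n, lo m n → p n) (hphi : ∀ m n, p n → hi m n)
    (hgap : ∀ ε > 0, ∃ m,
      (Nat.count (hi m) (M m) : ℝ) ≤ Nat.count (lo m) (M m) + ε * M m) :
    ∃ x, Tendsto (fun N => (Nat.count p N : ℝ) / N) atTop (𝓝 x) := by
  refine cauchySeq_tendsto_of_complete (Metric.cauchySeq_iff'.2 fun ε hε => ?_)
  obtain ⟨m, hgap⟩ := hgap (ε / 4) (by positivity)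
  have hM' : (0 : ℝ) < M m := by exact_mod_cast hM m
  set ℓ := (Nat.count (lo m) (M m) : ℝ) / M m
  have hgap' : (Nat.count (hi m) (M m) : ℝ) / M m ≤ ℓ + ε / 4 := by
    rw [div_le_iff₀ hM', add_mul, div_mul_cancel₀ _ hM'.ne']
    exact hgap
  have hlow := ((hlo m).tendsto_count_div (hM m)).eventually_const_lt
    (sub_lt_self ℓ (by positivity : 0 < ε / 4))
  have hup := ((hhi m).tendsto_count_div (hM m)).eventually_lt_const
    (lt_add_of_pos_right _ (by positivity : 0 < ε / 4))
  obtain ⟨N₀, hN₀⟩ := eventually_atTop.1 (hlow.and hup)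
  have hband : ∀ N ≥ N₀,
      ℓ - ε / 4 < Nat.count p N / N ∧ (Nat.count p N : ℝ) / N < ℓ + ε / 2 := by
    intro N hN
    obtain ⟨hN_lo, hN_hi⟩ := hN₀ N hN
    have hlo_le : (Nat.count (lo m) N : ℝ) / N ≤ Nat.count p N / N := by
      gcongr
      exact hlop m _
    have hle_hi : (Nat.count p N : ℝ) / N ≤ Nat.count (hi m) N / N := by
      gcongr
      exact hphi m _
    constructor <;> linarith
  refine ⟨N₀, fun N hN => ?_⟩
  rw [Real.dist_eq, abs_sub_lt_iff]
  have := hband N hN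
  have := hband N₀ le_rfl
  constructor <;> linarith

theorem s2_add_two_pow_mul {m t : ℕ} (ht : t < 2 ^ m) (q : ℕ) :
    s2 (t + 2 ^ m * q) = s2 t + s2 q :=
  Nat.digits_sum_add_base_pow_mul one_lt_two ht q

theorem s2_add_sub_s2_eq_of_mod_add_lt {a m n : ℕ} (h : n % 2 ^ m + a < 2 ^ m) :
    (s2 (n + a) : ℤ) - s2 n = (s2 (n % 2 ^ m + a) : ℤ) - s2 (n % 2 ^ m) := by
  have hn := Nat.mod_add_div n (2 ^ m)
  have h₁ : s2 (n + a) = s2 (n % 2 ^ m + a) + s2 (n / 2 ^ m) := by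
    rw [← s2_add_two_pow_mul h, add_right_comm, hn]
  have h₂ : s2 n = s2 (n % 2 ^ m) + s2 (n / 2 ^ m) := by
    rw [← s2_add_two_pow_mul (Nat.mod_lt n (by positivity)), hn]
  rw [h₁, h₂]
  push_cast
  ring

theorem Nat.count_not_mod_add_lt_le (a M : ℕ) :
    Nat.count (fun k => ¬ k % M + a < M) M ≤ a := by
  rw [Nat.count_eq_card_filter_range]
  calc _ ≤ (Finset.Ico (M - a) M).card := by
        refine Finset.card_le_card fun k hk => ?_
        rw [Finset.mem_filter, Finset.mem_range] at hk
        rw [Nat.mod_eq_of_lt hk.1] at hk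
        rw [Finset.mem_Ico]
        omega
    _ ≤ a := by
        rw [Nat.card_Ico]
        omega

theorem density_exists (a : ℕ) (d : ℤ) : ∃ x : ℝ, hasDensity a d x := by
  simp only [hasDensity, ← Nat.count_eq_card_filter_range]
  let fits (m r : ℕ) : Prop := r + a < 2 ^ m
  let good (r : ℕ) : Prop := (s2 (r + a) : ℤ) - s2 r = d
  refine Nat.exists_tendsto_count_div_of_periodic_squeeze (M := (2 ^ ·))
    (lo := fun m n => fits m (n % 2 ^ m) ∧ good (n % 2 ^ m))
    (hi := fun m n => fits m (n % 2 ^ m) → good (n % 2 ^ m)) (fun m => by positivity)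
    (fun m => (Nat.periodic_mod _).comp fun r => fits m r ∧ good r)
    (fun m => (Nat.periodic_mod _).comp fun r => fits m r → good r)
    (fun m n ⟨hfit, hn⟩ => (s2_add_sub_s2_eq_of_mod_add_lt hfit).trans hn)
    (fun m n hn hfit => (s2_add_sub_s2_eq_of_mod_add_lt hfit).symm.trans hn) fun ε hε => ?_
  obtain ⟨m, hm⟩ := pow_unbounded_of_one_lt (a / ε) one_lt_two
  refine ⟨m, ?_⟩
  have hcount := (Nat.count_imp_le (fun n => fits m (n % 2 ^ m)) (good <| · % 2 ^ m) _).trans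
    (Nat.add_le_add_left (Nat.count_not_mod_add_lt_le a (2 ^ m)) _)
  rw [div_lt_iff₀ hε] at hm
  have hcount' := (Nat.cast_le (α := ℝ)).2 hcount
  push_cast at hcount' ⊢
  linarith
end

section
/- For every a ∈ ℕ and d ∈ ℤ, μ_{2a}(d) = μ_a(d), where μ_a(d) is the asymptotic density of {n : s₂(n+a) - s₂(n) = d}. -/
open Filter

lemma s2_two_mul (n : ℕ) : s2 (2 * n) = s2 n := by
  rcases Nat.eq_zero_or_pos n with h | h
  · simp [h]
  · unfold s2
    rw [Nat.digits_def' (by norm_num) (by omega)]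
    simp [Nat.mul_div_cancel_left _ (by norm_num : 0 < 2)]

lemma s2_two_mul_add_one (n : ℕ) : s2 (2 * n + 1) = s2 n + 1 := by
  unfold s2
  rw [Nat.digits_def' (by norm_num) (by omega)]
  have h1 : (2 * n + 1) % 2 = 1 := by omega
  have h2 : (2 * n + 1) / 2 = n := by omega
  rw [h1, h2]
  simp [Nat.add_comm]

lemma count_eq (a : ℕ) (d : ℤ) (N : ℕ) :
    ((Finset.range (2 * N)).filter
      (fun n => (s2 (n + 2 * a) : ℤ) - s2 n = d)).card
    = 2 * ((Finset.range N).filter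
      (fun n => (s2 (n + a) : ℤ) - s2 n = d)).card := by
  induction N with
  | zero => simp
  | succ N ih =>
    have hP0 : ((s2 (2 * N + 2 * a) : ℤ) - s2 (2 * N) = d)
        ↔ ((s2 (N + a) : ℤ) - s2 N = d) := by
      have : 2 * N + 2 * a = 2 * (N + a) := by ring
      rw [this, s2_two_mul, s2_two_mul]
    have hP1 : ((s2 (2 * N + 1 + 2 * a) : ℤ) - s2 (2 * N + 1) = d)
        ↔ ((s2 (N + a) : ℤ) - s2 N = d) := by
      have : 2 * N + 1 + 2 * a = 2 * (N + a) + 1 := by ring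
      rw [this, s2_two_mul_add_one, s2_two_mul_add_one]
      push_cast
      constructor <;> intro h <;> linarith
    have hr : 2 * (N + 1) = (2 * N + 1) + 1 := by ring
    rw [hr, Finset.range_add_one, Finset.range_add_one, Finset.filter_insert,
      Finset.filter_insert, Finset.range_add_one, Finset.filter_insert]
    by_cases hQ : (s2 (N + a) : ℤ) - s2 N = d
    · rw [if_pos (hP1.mpr hQ), if_pos (hP0.mpr hQ), if_pos hQ]
      rw [Finset.card_insert_of_notMem (by simp), Finset.card_insert_of_notMem
        (by simp), Finset.card_insert_of_notMem (by simp)]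
      omega
    · rw [if_neg (fun h => hQ (hP1.mp h)), if_neg (fun h => hQ (hP0.mp h)), if_neg hQ]
      exact ih

theorem mu_two_a (a : ℕ) (d : ℤ) (x y : ℝ)
    (hx : hasDensity (2 * a) d x) (hy : hasDensity a d y) : x = y := by
  have h2N : Tendsto (fun N : ℕ => 2 * N) atTop atTop :=
    tendsto_atTop_atTop_of_monotone (fun m n h => by omega) (fun b => ⟨b, by omega⟩)
  have hx2 := hx.comp h2N
  simp only [Function.comp_def, Nat.cast_mul] at hx2
  have heq : (fun N : ℕ =>
      (((Finset.range (2 * N)).filter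
        (fun n => (s2 (n + 2 * a) : ℤ) - s2 n = d)).card : ℝ) / (2 * N))
      = (fun N : ℕ =>
      (((Finset.range N).filter (fun n => (s2 (n + a) : ℤ) - s2 n = d)).card : ℝ) / N) := by
    funext N
    rw [count_eq]
    push_cast
    rcases Nat.eq_zero_or_pos N with h | h
    · simp [h]
    · rw [mul_div_mul_left _ _ (by norm_num : (2:ℝ) ≠ 0)]
  have hx2' : Tendsto (fun N : ℕ =>
      (((Finset.range N).filter (fun n => (s2 (n + a) : ℤ) - s2 n = d)).card : ℝ) / N)
      atTop (nhds x) := by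
    rw [← heq]
    exact hx2
  exact tendsto_nhds_unique hx2' hy
end

section
/- For every integer d ≤ 1, μ_1(d) = (1/2)^{2-d}, and μ_1(d) = 0 for d ≥ 2. -/
open Filter

/-! Legendre's formula for `ν₂((n+1)!)` gives `s₂(n+1) = s₂(n) + 1 - ν₂(n+1)`. Hence
`s₂(n+1) - s₂(n) = 1 - k` exactly when `ν₂(n+1) = k`, i.e. when `n ≡ 2^k - 1 (mod 2^(k+1))`,
a residue class of density `2^-(k+1)`; a difference `≥ 2` never occurs. -/

open Finset Topology

theorem Nat.digits_sum_add_one_add_sub_one_mul_padicValNat (p n : ℕ) [Fact p.Prime] :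
    (p.digits (n + 1)).sum + (p - 1) * padicValNat p (n + 1) = (p.digits n).sum + 1 := by
  have h_fact := sub_one_mul_padicValNat_factorial (p := p) n
  have h_fact_succ := sub_one_mul_padicValNat_factorial (p := p) (n + 1)
  rw [Nat.factorial_succ, padicValNat.mul n.add_one_ne_zero n.factorial_ne_zero, mul_add]
    at h_fact_succ
  have := Nat.digit_sum_le p n
  have := Nat.digit_sum_le p (n + 1)
  omega

theorem s2_add_one (n : ℕ) : (s2 (n + 1) : ℤ) = s2 n + 1 - padicValNat 2 (n + 1) := by
  have := Nat.digits_sum_add_one_add_sub_one_mul_padicValNat 2 n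
  simp only [Nat.add_one_sub_one, one_mul] at this
  unfold s2
  omega

theorem padicValNat_eq_iff_pow_dvd_and_not_pow_succ_dvd {p m : ℕ} [Fact p.Prime] (k : ℕ)
    (hm : m ≠ 0) : padicValNat p m = k ↔ p ^ k ∣ m ∧ ¬p ^ (k + 1) ∣ m := by
  rw [padicValNat_dvd_iff_le hm, padicValNat_dvd_iff_le hm]
  omega

theorem mod_two_pow_succ_eq_two_pow_iff (m k : ℕ) :
    m % 2 ^ (k + 1) = 2 ^ k ↔ 2 ^ k ∣ m ∧ ¬2 ^ (k + 1) ∣ m := by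
  constructor
  · intro h
    refine ⟨?_, fun hdvd => (pow_pos two_pos k).ne (by rwa [Nat.mod_eq_zero_of_dvd hdvd] at h)⟩
    rw [Nat.dvd_iff_mod_eq_zero, ← Nat.mod_mod_of_dvd m (pow_dvd_pow 2 k.le_succ), h,
      Nat.mod_self]
  · rintro ⟨⟨t, rfl⟩, hndvd⟩
    have ht : t % 2 = 1 := by
      rw [pow_succ, Nat.mul_dvd_mul_iff_left (by positivity)] at hndvd
      omega
    rw [pow_succ, Nat.mul_mod_mul_left, ht, mul_one]

theorem padicValNat_two_add_one_eq_iff (n k : ℕ) :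
    padicValNat 2 (n + 1) = k ↔ n ≡ 2 ^ k - 1 [MOD 2 ^ (k + 1)] := by
  have hk : 2 ^ k - 1 + 1 = 2 ^ k := Nat.sub_add_cancel Nat.one_le_two_pow
  rw [padicValNat_eq_iff_pow_dvd_and_not_pow_succ_dvd k n.add_one_ne_zero,
    ← mod_two_pow_succ_eq_two_pow_iff, ← (Nat.ModEq.refl 1).add_iff_right, hk,
    Nat.ModEq, Nat.mod_eq_of_lt (Nat.pow_lt_pow_succ one_lt_two)]

theorem tendsto_card_filter_modEq_div (M v : ℕ) (hM : 0 < M) :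
    Tendsto (fun N : ℕ => (#{x ∈ range N | x ≡ v [MOD M]} : ℝ) / N) atTop (𝓝 (1 / M)) := by
  have hcount : ∀ N : ℕ, (#{x ∈ range N | x ≡ v [MOD M]} : ℝ) =
      ⌊1 / (M : ℝ) * N⌋₊ + ((if v % M < N % M then 1 else 0 : ℕ) : ℝ) := by
    intro N
    rw [← Nat.count_eq_card_filter_range, Nat.count_modEq_card N hM, one_div_mul_eq_div,
      Nat.floor_div_eq_div]
    push_cast
    rfl
  have hfloor := (tendsto_nat_floor_mul_div_atTop (a := 1 / (M : ℝ)) (by positivity)).comp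
    tendsto_natCast_atTop_atTop
  have hcorrection : Tendsto (fun N : ℕ => ((if v % M < N % M then 1 else 0 : ℕ) : ℝ) / N)
      atTop (𝓝 0) := by
    refine squeeze_zero (fun N => by positivity) (fun N => ?_)
      tendsto_one_div_atTop_nhds_zero_nat
    gcongr
    split_ifs <;> simp
  simpa [hcount, add_div] using hfloor.add hcorrection

theorem mu_one_formula :
    (∀ d : ℤ, d ≤ 1 → hasDensity 1 d ((1 / 2 : ℝ) ^ (2 - d))) ∧
    (∀ d : ℤ, 2 ≤ d → hasDensity 1 d 0) := by
  refine ⟨fun d hd => ?_, fun d hd => ?_⟩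
  · obtain ⟨k, rfl⟩ : ∃ k : ℕ, d = 1 - k := ⟨(1 - d).toNat, by omega⟩
    have hfilter : ∀ N, {n ∈ range N | (s2 (n + 1) : ℤ) - s2 n = 1 - k} =
        {n ∈ range N | n ≡ 2 ^ k - 1 [MOD 2 ^ (k + 1)]} := fun N =>
      filter_congr fun n _ => by
        rw [s2_add_one, ← padicValNat_two_add_one_eq_iff]
        omega
    have hvalue : (1 / 2 : ℝ) ^ (2 - (1 - k : ℤ)) = 1 / ((2 ^ (k + 1) : ℕ) : ℝ) := by
      rw [show (2 : ℤ) - (1 - k) = (k + 1 : ℕ) by push_cast; ring, zpow_natCast]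
      simp
    unfold hasDensity
    simp_rw [hfilter, hvalue]
    exact tendsto_card_filter_modEq_div _ _ (by positivity)
  · have hempty : ∀ n, (s2 (n + 1) : ℤ) - s2 n ≠ d := fun n => by
      rw [s2_add_one]
      omega
    simp [hasDensity, hempty]
end

section
/- Let I₀, I₁, α₀, α₁, β₀, β₁ be the 2×2 matrices I₀=[[1,0],[½,½]], I₁=[[½,½],[0,1]], α₀=½[[0,0],[1,-1]], α₁=½[[1,-1],[0,0]], β₀=½[[0,0],[1,1]], β₁=½[[1,1],[0,0]]. For X ∈ {0,1}^ℕ let F^{(n)}_{(α^p, β^q)}(X) be the set of products M_X(u) over words u ∈ {I,α,β}^* of length n with exactly p letters α and q letters β (where the j-th letter l of u is substituted by l_{X_j}). Then, measuring with the maximal l¹ row norm ‖·‖ (which is submultiplicative), there is a constant C (depending on p,q but not X) with Σ_{M∈F^{(n)}_{(α^p,β^q)}(X)} ‖M‖ ≤ C·n^q for all n. -/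
/-- The alphabet {I, α, β}. -/
inductive MSym : Type
  | I : MSym
  | a : MSym
  | b : MSym
  deriving DecidableEq

instance : Fintype MSym :=
  ⟨{MSym.I, MSym.a, MSym.b}, fun x => by cases x <;> simp⟩

/-- The matrices I₀, I₁, α₀, α₁, β₀, β₁, indexed by a symbol and a binary digit. -/
noncomputable def msym (s : MSym) (x : Bool) : Matrix (Fin 2) (Fin 2) ℝ :=
  match s, x with
  | MSym.I, false => !![1, 0; 1/2, 1/2]
  | MSym.I, true  => !![1/2, 1/2; 0, 1]
  | MSym.a, false => !![0, 0; 1/2, -(1/2)]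
  | MSym.a, true  => !![1/2, -(1/2); 0, 0]
  | MSym.b, false => !![0, 0; 1/2, 1/2]
  | MSym.b, true  => !![1/2, 1/2; 0, 0]

/-- The product `M_X(u)` for a word `u : Fin n → MSym`, where the `j`-th letter is
substituted by the matrix indexed by the digit `X j`. -/
noncomputable def MX (X : ℕ → Bool) (n : ℕ) (w : Fin n → MSym) :
    Matrix (Fin 2) (Fin 2) ℝ :=
  (List.ofFn fun j : Fin n => msym (w j) (X j)).prod

/-- The maximal l¹ row norm on 2×2 real matrices. -/
noncomputable def rowNorm (M : Matrix (Fin 2) (Fin 2) ℝ) : ℝ :=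
  max (|M 0 0| + |M 0 1|) (|M 1 0| + |M 1 1|)

/-!
Submultiplicativity of the row norm, `‖I_x‖, ‖α_x‖, ‖β_x‖ ≤ 1` and `α_x I_y = ½ α_x` bound
`‖M_X(u)‖` by a weight of the word `u` alone: every `I` whose nearest letter other than `I` on
its left is `α` contributes a factor `½`. Let `F_n` and `T_n` be the sums of these weights over
the words of length `n` with `p` letters `α` and `q` letters `β`, read starting without resp.
with a pending `α`. Splitting off the first letter gives `F_{n+1} = F_n + R_n` and
`T_{n+1} = T_n / 2 + R_n` with the same `R_n`, hence `∑_{m<n} T_m = 2 (F_n - T_n) ≤ 2 F_n`.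
Summing the recursion for `F` therefore gives
`F_n(p, q) ≤ [p = q = 0] + 2 F_n(p - 1, q) + ∑_{m<n} F_m(p, q - 1)`,
and induction on `q`, then `p`, yields `F_n(p, q) ≤ 3^(p+q) n^q`.
-/

attribute [local instance] Matrix.linftyOpNormedRing Matrix.linftyOpNormedAlgebra

open Finset

lemma rowNorm_eq_norm (M : Matrix (Fin 2) (Fin 2) ℝ) : rowNorm M = ‖M‖ := by
  simp [Matrix.linfty_opNorm_def, rowNorm, Fin.univ_succ]

lemma norm_msym_le_one (c : MSym) (x : Bool) : ‖msym c x‖ ≤ 1 := by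
  rw [← rowNorm_eq_norm]
  cases c <;> cases x <;> norm_num [msym, rowNorm]

lemma msym_a_mul_msym_I (x y : Bool) :
    msym .a x * msym .I y = (1 / 2 : ℝ) • msym .a x := by
  cases x <;> cases y <;> ext i j <;> fin_cases i <;> fin_cases j <;>
    norm_num [msym, Matrix.mul_apply, Fin.sum_univ_two]

namespace MSym

/-- `s = true` means that the last letter other than `I` read so far was `α`. -/
def nextState : Bool → MSym → Bool
  | s, I => s
  | _, a => true
  | _, b => false

noncomputable def stepFactor : Bool → MSym → ℝ
  | true, I => 1 / 2
  | _, _ => 1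

lemma stepFactor_nonneg (s : Bool) (c : MSym) : 0 ≤ stepFactor s c := by
  cases s <;> cases c <;> norm_num [stepFactor]

end MSym

open MSym

noncomputable def wordWeight (s : Bool) : List MSym → ℝ
  | [] => 1
  | c :: t => stepFactor s c * wordWeight (nextState s c) t

lemma wordWeight_nonneg (s : Bool) (l : List MSym) : 0 ≤ wordWeight s l := by
  induction l generalizing s with
  | nil => simp [wordWeight]
  | cons c t ih => exact mul_nonneg (stepFactor_nonneg s c) (ih _)

def HalvedByI (A : Matrix (Fin 2) (Fin 2) ℝ) : Prop :=
  ∀ y, A * msym .I y = (1 / 2 : ℝ) • A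

section Step

variable {s : Bool} {A : Matrix (Fin 2) (Fin 2) ℝ}

lemma norm_mul_msym_le (hA : s = true → HalvedByI A) (c : MSym) (x : Bool) :
    ‖A * msym c x‖ ≤ stepFactor s c * ‖A‖ := by
  by_cases hI : s = true ∧ c = .I
  · obtain ⟨rfl, rfl⟩ := hI
    rw [hA rfl x, norm_smul]
    norm_num [stepFactor]
  · have h1 : stepFactor s c = 1 := by cases s <;> cases c <;> simp_all [stepFactor]
    rw [h1, one_mul]
    exact (norm_mul_le _ _).trans (mul_le_of_le_one_right (norm_nonneg _) (norm_msym_le_one c x))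

lemma halvedByI_mul_msym (hA : s = true → HalvedByI A) (c : MSym) (x : Bool) :
    nextState s c = true → HalvedByI (A * msym c x) := by
  intro hs y
  cases c
  · rw [hA hs x, smul_mul_assoc, hA hs y]
  · rw [mul_assoc, msym_a_mul_msym_I, mul_smul_comm]
  · cases hs

end Step

lemma norm_mul_prod_le_wordWeight (l : List (MSym × Bool)) (s : Bool)
    (A : Matrix (Fin 2) (Fin 2) ℝ) (hA : s = true → HalvedByI A) :
    ‖A * (l.map fun cx => msym cx.1 cx.2).prod‖ ≤ ‖A‖ * wordWeight s (l.map Prod.fst) := by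
  induction l generalizing s A with
  | nil => simp [wordWeight]
  | cons cx t ih =>
    obtain ⟨c, x⟩ := cx
    calc ‖A * ((c, x) :: t |>.map fun cx => msym cx.1 cx.2).prod‖
        = ‖A * msym c x * (t.map fun cx => msym cx.1 cx.2).prod‖ := by simp [mul_assoc]
      _ ≤ ‖A * msym c x‖ * wordWeight (nextState s c) (t.map Prod.fst) :=
        ih _ _ (halvedByI_mul_msym hA c x)
      _ ≤ stepFactor s c * ‖A‖ * wordWeight (nextState s c) (t.map Prod.fst) :=
        mul_le_mul_of_nonneg_right (norm_mul_msym_le hA c x) (wordWeight_nonneg _ _)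
      _ = ‖A‖ * wordWeight s ((c, x) :: t |>.map Prod.fst) := by
        simp only [List.map_cons, wordWeight]; ring

lemma rowNorm_MX_le_wordWeight (X : ℕ → Bool) (n : ℕ) (w : Fin n → MSym) :
    rowNorm (MX X n w) ≤ wordWeight false (List.ofFn w) := by
  have h := norm_mul_prod_le_wordWeight (List.ofFn fun j => (w j, X j)) false 1 (by simp)
  simpa [rowNorm_eq_norm, MX, List.map_ofFn, Function.comp_def] using h

def letterCount {n : ℕ} (w : Fin n → MSym) (c : MSym) : ℕ :=
  (univ.filter fun j => w j = c).card

lemma letterCount_cons {n : ℕ} (c : MSym) (w : Fin n → MSym) (d : MSym) :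
    letterCount (Fin.cons c w : Fin (n + 1) → MSym) d =
      letterCount w d + if c = d then 1 else 0 := by
  simp only [letterCount, card_filter, Fin.sum_univ_succ, Fin.cons_zero, Fin.cons_succ]
  ring

def wordsWithCounts (n p q : ℕ) : Finset (Fin n → MSym) :=
  univ.filter fun w => letterCount w .a = p ∧ letterCount w .b = q

noncomputable def weightSum (s : Bool) (n p q : ℕ) : ℝ :=
  ∑ w ∈ wordsWithCounts n p q, wordWeight s (List.ofFn w)

lemma weightSum_nonneg (s : Bool) (n p q : ℕ) : 0 ≤ weightSum s n p q :=
  sum_nonneg fun _ _ => wordWeight_nonneg _ _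

lemma weightSum_zero (s : Bool) (p q : ℕ) :
    weightSum s 0 p q = if p = 0 ∧ q = 0 then 1 else 0 := by
  simp only [weightSum, wordsWithCounts, sum_filter, Fintype.sum_unique]
  split_ifs <;> simp_all [letterCount, wordWeight, eq_comm]

lemma weightSum_succ (s : Bool) (n p q : ℕ) :
    weightSum s (n + 1) p q = stepFactor s .I * weightSum s n p q
      + (if p = 0 then 0 else weightSum true n (p - 1) q)
      + (if q = 0 then 0 else weightSum false n p (q - 1)) := by
  have hsplit : weightSum s (n + 1) p q = ∑ c : MSym, ∑ w : Fin n → MSym,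
      if letterCount w .a + (if c = .a then 1 else 0) = p ∧
        letterCount w .b + (if c = .b then 1 else 0) = q
      then stepFactor s c * wordWeight (nextState s c) (List.ofFn w) else 0 := by
    rw [weightSum, wordsWithCounts, sum_filter,
      ← (Fin.consEquiv fun _ => MSym).sum_comp, Fintype.sum_prod_type]
    simp [Fin.consEquiv, letterCount_cons, List.ofFn_succ, wordWeight]
  have huniv : (univ : Finset MSym) = {I, a, b} := rfl
  rw [hsplit, huniv, sum_insert (by decide), sum_insert (by decide), sum_singleton, add_assoc]
  congr 1
  · simp [weightSum, wordsWithCounts, sum_filter, mul_sum, nextState]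
  congr 1
  · cases p <;> simp [weightSum, wordsWithCounts, sum_filter, stepFactor, nextState]
  · cases q <;> simp [weightSum, wordsWithCounts, sum_filter, stepFactor, nextState]

lemma sum_range_eq_two_mul_sub {f t r : ℕ → ℝ} (h0 : f 0 = t 0)
    (hf : ∀ n, f (n + 1) = f n + r n) (ht : ∀ n, t (n + 1) = t n / 2 + r n) (n : ℕ) :
    ∑ m ∈ range n, t m = 2 * (f n - t n) := by
  induction n with
  | zero => simp [h0]
  | succ n ih => rw [sum_range_succ, ih, hf, ht]; ring

lemma sum_range_weightSum_true_le (n p q : ℕ) :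
    ∑ m ∈ range n, weightSum true m p q ≤ 2 * weightSum false n p q := by
  have h := sum_range_eq_two_mul_sub (f := fun m => weightSum false m p q)
    (t := fun m => weightSum true m p q)
    (r := fun m => (if p = 0 then 0 else weightSum true m (p - 1) q)
      + (if q = 0 then 0 else weightSum false m p (q - 1)))
    (by simp [weightSum_zero]) (fun m => by simp [weightSum_succ, stepFactor, add_assoc])
    (fun m => by simp only [weightSum_succ, stepFactor, add_assoc]; ring) n
  linarith [weightSum_nonneg true n p q]

lemma weightSum_false_le (n p q : ℕ) :
    weightSum false n p q ≤ (if p = 0 ∧ q = 0 then 1 else 0)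
      + (if p = 0 then 0 else 2 * weightSum false n (p - 1) q)
      + (if q = 0 then 0 else ∑ m ∈ range n, weightSum false m p (q - 1)) := by
  rw [eq_sum_range_sub (fun m => weightSum false m p q) n, weightSum_zero]
  simp only [weightSum_succ, stepFactor, one_mul, add_assoc, add_sub_cancel_left, sum_add_distrib]
  gcongr _ + (?_ + ?_)
  · split_ifs
    · simp
    · exact sum_range_weightSum_true_le n (p - 1) q
  · split_ifs <;> simp

lemma le_three_pow_mul_pow {f : ℕ → ℕ → ℕ → ℝ}
    (hf : ∀ n p q, f n p q ≤ (if p = 0 ∧ q = 0 then 1 else 0)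
      + (if p = 0 then 0 else 2 * f n (p - 1) q)
      + (if q = 0 then 0 else ∑ m ∈ range n, f m p (q - 1)))
    (n p q : ℕ) : f n p q ≤ 3 ^ (p + q) * n ^ q := by
  induction q generalizing n p with
  | zero =>
    induction p generalizing n with
    | zero => simpa using hf n 0 0
    | succ p ih =>
      calc f n (p + 1) 0 ≤ 2 * f n p 0 := by simpa using hf n (p + 1) 0
        _ ≤ 2 * (3 ^ (p + 0) * (n : ℝ) ^ 0) := by gcongr; exact ih n
        _ ≤ 3 ^ (p + 1 + 0) * (n : ℝ) ^ 0 := by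
            simp only [add_zero, pow_zero, mul_one, pow_succ]
            linarith [pow_pos (three_pos : (0 : ℝ) < 3) p]
  | succ q ihq =>
    have hsum : ∀ p n, ∑ m ∈ range n, f m p q ≤ 3 ^ (p + q) * (n : ℝ) ^ (q + 1) := by
      intro p n
      calc ∑ m ∈ range n, f m p q ≤ ∑ m ∈ range n, 3 ^ (p + q) * (n : ℝ) ^ q :=
            sum_le_sum fun m hm => (ihq m p).trans (by gcongr; exact (mem_range.1 hm).le)
        _ = 3 ^ (p + q) * (n : ℝ) ^ (q + 1) := by
            simp only [sum_const, card_range, nsmul_eq_mul]; ring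
    induction p generalizing n with
    | zero =>
      calc f n 0 (q + 1) ≤ ∑ m ∈ range n, f m 0 q := by simpa using hf n 0 (q + 1)
        _ ≤ 3 ^ (0 + q) * (n : ℝ) ^ (q + 1) := hsum 0 n
        _ ≤ 3 ^ (0 + (q + 1)) * (n : ℝ) ^ (q + 1) := by gcongr <;> simp
    | succ p ih =>
      calc f n (p + 1) (q + 1) ≤ 2 * f n p (q + 1) + ∑ m ∈ range n, f m (p + 1) q := by
            simpa using hf n (p + 1) (q + 1)
        _ ≤ 2 * (3 ^ (p + (q + 1)) * (n : ℝ) ^ (q + 1))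
              + 3 ^ (p + 1 + q) * (n : ℝ) ^ (q + 1) := by
            gcongr
            exacts [ih n, hsum (p + 1) n]
        _ = 3 ^ (p + 1 + (q + 1)) * (n : ℝ) ^ (q + 1) := by ring

theorem type_contributes_with_weight_q (p q : ℕ) :
    ∃ C : ℝ, 0 < C ∧ ∀ (X : ℕ → Bool) (n : ℕ),
      ∑ w ∈ Finset.univ.filter (fun w : Fin n → MSym =>
          (Finset.univ.filter fun j => w j = MSym.a).card = p ∧
          (Finset.univ.filter fun j => w j = MSym.b).card = q),
        rowNorm (MX X n w) ≤ C * n ^ q := by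
  refine ⟨3 ^ (p + q), by positivity, fun X n => ?_⟩
  calc _ ≤ weightSum false n p q := sum_le_sum fun w _ => rowNorm_MX_le_wordWeight X n w
    _ ≤ 3 ^ (p + q) * n ^ q := le_three_pow_mul_pow weightSum_false_le n p q
end

section
/- Let (Y, B, ν, T) be a measure-preserving ergodic dynamical system and g₁,…,g_r ∈ L¹(Y,ν). Then for ν-almost every y, lim_{n→∞} (1/n^r) Σ_{0 ≤ i₁ < … < i_r ≤ n−1} g₁(T^{i₁} y) ··· g_r(T^{i_r} y) = (1/r!) ∏_{j=1}^r ∫ g_j dν. -/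
/-!
Birkhoff's pointwise ergodic theorem, applied to every `g j` and `|g j|`, shows that for almost
every `y` the sequences `a j i = g j (T^[i] y)` have Cesàro means `∫ g j` and absolute partial
sums `O(n)`. The rest is deterministic. Let `S_r(n)` be the sum over strictly increasing
`r`-tuples below `n`; sorting by the last entry, `S_{r+1}(n) = ∑_{m<n} a_r(m) S_r(m)`. If
`S_r(m) ~ C m ^ r`, Abel summation turns the Cesàro convergence of `a_r` into
`S_{r+1}(n) ~ c C n ^ (r+1) / (r+1)`, whence the factor `1 / r!`.

Birkhoff's theorem follows Garsia's proof of the maximal ergodic theorem: when `∫ f < 0`, the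
`T`-invariant set on which the Birkhoff sums of `f` are unbounded above lies inside the set where
some Birkhoff sum is positive, on which `f` has nonnegative integral; by ergodicity it is null.
-/

open Filter MeasureTheory Finset Asymptotics Topology
open scoped Classical

section Birkhoff

variable {α : Type*} {T : α → α} {f : α → ℝ}

noncomputable def maxBirkhoffSum (T : α → α) (f : α → ℝ) (N : ℕ) : α → ℝ :=
  (range (N + 1)).sup' nonempty_range_add_one (birkhoffSum T f)

lemma birkhoffSum_le_maxBirkhoffSum {n N : ℕ} (h : n ≤ N) (x : α) :
    birkhoffSum T f n x ≤ maxBirkhoffSum T f N x := by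
  rw [maxBirkhoffSum, Finset.sup'_apply]
  exact le_sup' (fun n => birkhoffSum T f n x) (mem_range_succ_iff.2 h)

lemma maxBirkhoffSum_nonneg (N : ℕ) (x : α) : 0 ≤ maxBirkhoffSum T f N x := by
  simpa using birkhoffSum_le_maxBirkhoffSum (T := T) (f := f) (Nat.zero_le N) x

lemma maxBirkhoffSum_mono : Monotone (maxBirkhoffSum T f) :=
  fun _ _ h => sup'_mono _ (range_subset_range.2 (Nat.succ_le_succ h)) _

lemma maxBirkhoffSum_le_max (N : ℕ) (x : α) :
    maxBirkhoffSum T f N x ≤ max 0 (f x + maxBirkhoffSum T f N (T x)) := by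
  refine (Finset.sup'_apply _ _ _).trans_le ((sup'_le_iff _ _).2 fun n hn => ?_)
  cases n with
  | zero => simp
  | succ n =>
    have := birkhoffSum_le_maxBirkhoffSum (T := T) (f := f) (n := n) (N := N)
      (by rw [mem_range] at hn; omega) (T x)
    rw [birkhoffSum_succ']
    exact le_max_of_le_right (by linarith)

lemma bddAbove_range_birkhoffSum_apply_iff (x : α) :
    BddAbove (Set.range fun n => birkhoffSum T f n (T x)) ↔
      BddAbove (Set.range fun n => birkhoffSum T f n x) := by
  simp only [bddAbove_def, Set.forall_mem_range]
  constructor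
  · rintro ⟨M, hM⟩
    refine ⟨max 0 (f x + M), fun n => ?_⟩
    cases n with
    | zero => simp
    | succ n => rw [birkhoffSum_succ']; exact le_max_of_le_right (by linarith [hM n])
  · rintro ⟨M, hM⟩
    exact ⟨M - f x, fun n => by linarith [hM (n + 1), birkhoffSum_succ' T f n x]⟩

lemma iUnion_setOf_maxBirkhoffSum_pos :
    ⋃ N, {x | 0 < maxBirkhoffSum T f N x} = {x | ∃ n, 0 < birkhoffSum T f n x} := by
  ext x
  simp only [Set.mem_iUnion, Set.mem_ofPred_eq, maxBirkhoffSum, Finset.sup'_apply,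
    Finset.lt_sup'_iff]
  exact ⟨fun ⟨_, n, _, hn⟩ => ⟨n, hn⟩, fun ⟨n, hn⟩ => ⟨n, n, self_mem_range_succ n, hn⟩⟩

variable [MeasurableSpace α] {μ : Measure α}

lemma measurable_birkhoffSum (hT : Measurable T) (hf : Measurable f) (n : ℕ) :
    Measurable (birkhoffSum T f n) :=
  Finset.measurable_sum _ fun k _ => hf.comp (hT.iterate k)

lemma measurable_maxBirkhoffSum (hT : Measurable T) (hf : Measurable f) (N : ℕ) :
    Measurable (maxBirkhoffSum T f N) :=
  Finset.measurable_sup' _ fun n _ => measurable_birkhoffSum hT hf n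

lemma MeasureTheory.MeasurePreserving.integrable_birkhoffSum (hT : MeasurePreserving T μ μ)
    (hf : Integrable f μ) (n : ℕ) : Integrable (birkhoffSum T f n) μ :=
  integrable_finsetSum _ fun k _ => (hT.iterate k).integrable_comp_of_integrable hf

lemma MeasureTheory.MeasurePreserving.integrable_maxBirkhoffSum (hT : MeasurePreserving T μ μ)
    (hf : Integrable f μ) (N : ℕ) : Integrable (maxBirkhoffSum T f N) μ :=
  sup'_induction (p := (Integrable · μ)) _ _ (fun _ h₁ _ h₂ => h₁.sup h₂)
    fun n _ => hT.integrable_birkhoffSum hf n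

/-- Garsia's argument: `f ≥ M - M ∘ T` where `M = maxBirkhoffSum T f N` is positive, `M` vanishes
elsewhere, and `∫ M ∘ T = ∫ M`. -/
lemma MeasureTheory.MeasurePreserving.setIntegral_maxBirkhoffSum_pos_nonneg
    (hT : MeasurePreserving T μ μ) (hf : Measurable f) (hfi : Integrable f μ) (N : ℕ) :
    0 ≤ ∫ x in {x | 0 < maxBirkhoffSum T f N x}, f x ∂μ := by
  set M := maxBirkhoffSum T f N
  set E := {x | 0 < M x}
  have hMm := measurable_maxBirkhoffSum hT.measurable hf N
  have hM := hT.integrable_maxBirkhoffSum hfi N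
  have hMT : Integrable (M ∘ T) μ := hT.integrable_comp_of_integrable hM
  have hle : ∀ x ∈ E, M x - M (T x) ≤ f x := by
    intro x (hx : 0 < M x)
    rcases le_max_iff.1 (maxBirkhoffSum_le_max (T := T) (f := f) N x) with h | h <;> linarith
  have hME : ∫ x in E, M x ∂μ = ∫ x, M x ∂μ :=
    setIntegral_eq_integral_of_forall_compl_eq_zero fun x hx =>
      le_antisymm (not_lt.1 hx) (maxBirkhoffSum_nonneg N x)
  have hMTE : ∫ x in E, M (T x) ∂μ ≤ ∫ x, M x ∂μ :=
    calc ∫ x in E, M (T x) ∂μ ≤ ∫ x, M (T x) ∂μ :=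
          setIntegral_le_integral hMT (Eventually.of_forall fun x => maxBirkhoffSum_nonneg N _)
      _ = ∫ x, M x ∂μ := by
          rw [← integral_map hT.aemeasurable hMm.aestronglyMeasurable, hT.map_eq]
  calc (0 : ℝ) ≤ ∫ x in E, M x ∂μ - ∫ x in E, M (T x) ∂μ := by linarith
    _ = ∫ x in E, (M x - M (T x)) ∂μ := (integral_sub hM.integrableOn hMT.integrableOn).symm
    _ ≤ ∫ x in E, f x ∂μ :=
        setIntegral_mono_on (hM.sub hMT).integrableOn hfi.integrableOn
          (measurableSet_lt measurable_const hMm) hle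

/-- The maximal ergodic theorem. -/
theorem MeasureTheory.MeasurePreserving.setIntegral_exists_birkhoffSum_pos_nonneg
    (hT : MeasurePreserving T μ μ) (hf : Measurable f) (hfi : Integrable f μ) :
    0 ≤ ∫ x in {x | ∃ n, 0 < birkhoffSum T f n x}, f x ∂μ := by
  rw [← iUnion_setOf_maxBirkhoffSum_pos]
  refine ge_of_tendsto (tendsto_setIntegral_of_monotone
    (fun N => measurableSet_lt measurable_const (measurable_maxBirkhoffSum hT.measurable hf N))
    (fun _ _ h _ hx => hx.trans_le (maxBirkhoffSum_mono h _)) hfi.integrableOn)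
    (Eventually.of_forall fun N => hT.setIntegral_maxBirkhoffSum_pos_nonneg hf hfi N)

theorem Ergodic.ae_bddAbove_birkhoffSum [IsProbabilityMeasure μ] (hT : Ergodic T μ)
    (hf : Measurable f) (hfi : Integrable f μ) (hneg : ∫ x, f x ∂μ < 0) :
    ∀ᵐ x ∂μ, BddAbove (Set.range fun n => birkhoffSum T f n x) := by
  set B := {x | BddAbove (Set.range fun n => birkhoffSum T f n x)}
  have hB : MeasurableSet B :=
    measurableSet_bddAbove_range fun n => measurable_birkhoffSum hT.measurable hf n
  have hBinv : T ⁻¹' B = B := Set.ext bddAbove_range_birkhoffSum_apply_iff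
  refine (hT.ae_mem_or_ae_notMem hB hBinv).resolve_right fun hnot => hneg.not_ge ?_
  have hpos : ∀ᵐ x ∂μ, x ∈ {x | ∃ n, 0 < birkhoffSum T f n x} := by
    filter_upwards [hnot] with x hx
    obtain ⟨_, ⟨n, rfl⟩, hn⟩ := not_bddAbove_iff.1 hx 0
    exact ⟨n, hn⟩
  simpa [Measure.restrict_eq_self_of_ae_mem hpos] using
    hT.toMeasurePreserving.setIntegral_exists_birkhoffSum_pos_nonneg hf hfi

lemma Ergodic.ae_eventually_birkhoffSum_div_lt [IsProbabilityMeasure μ] (hT : Ergodic T μ)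
    (hf : Measurable f) (hfi : Integrable f μ) {a : ℝ} (ha : ∫ x, f x ∂μ < a) :
    ∀ᵐ x ∂μ, ∀ᶠ n : ℕ in atTop, birkhoffSum T f n x / n < a := by
  obtain ⟨b, hfb, hba⟩ := exists_between ha
  have hneg : ∫ x, (f x - b) ∂μ < 0 := by
    rw [integral_sub hfi (integrable_const b)]
    simpa using hfb
  filter_upwards [hT.ae_bddAbove_birkhoffSum (hf.sub measurable_const)
    (hfi.sub (integrable_const b)) hneg] with x ⟨M, hM⟩
  have hlim : Tendsto (fun n : ℕ => b + M / n) atTop (𝓝 b) := by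
    simpa using tendsto_const_nhds.add (tendsto_const_div_atTop_nhds_zero_nat M)
  filter_upwards [hlim.eventually (gt_mem_nhds hba), eventually_gt_atTop 0] with n hn hn0
  have hSn : birkhoffSum T f n x - n * b ≤ M := by
    simpa [birkhoffSum, Finset.sum_sub_distrib] using hM ⟨n, rfl⟩
  refine lt_of_le_of_lt ?_ hn
  rw [div_le_iff₀ (by positivity), add_mul, div_mul_cancel₀ _ (by positivity)]
  linarith

theorem Ergodic.ae_tendsto_birkhoffSum_div_of_measurable [IsProbabilityMeasure μ]
    (hT : Ergodic T μ) (hf : Measurable f) (hfi : Integrable f μ) :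
    ∀ᵐ x ∂μ, Tendsto (fun n : ℕ => birkhoffSum T f n x / n) atTop (𝓝 (∫ x, f x ∂μ)) := by
  have hupper : ∀ᵐ x ∂μ, ∀ q : ℚ,
      ∫ x, f x ∂μ < q → ∀ᶠ n : ℕ in atTop, birkhoffSum T f n x / n < q :=
    ae_all_iff.2 fun q => eventually_imp_distrib_left.2 (hT.ae_eventually_birkhoffSum_div_lt hf hfi)
  have hlower : ∀ᵐ x ∂μ, ∀ q : ℚ,
      (q : ℝ) < ∫ x, f x ∂μ → ∀ᶠ n : ℕ in atTop, (q : ℝ) < birkhoffSum T f n x / n := by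
    refine ae_all_iff.2 fun q => eventually_imp_distrib_left.2 fun hq => ?_
    have hq' : ∫ x, (-f) x ∂μ < -q := by simpa [integral_neg] using hq
    filter_upwards [hT.ae_eventually_birkhoffSum_div_lt hf.neg hfi.neg hq'] with x hx
    filter_upwards [hx] with n hn
    rw [birkhoffSum_neg, neg_div] at hn
    linarith
  filter_upwards [hupper, hlower] with x hup hlow
  refine tendsto_order.2 ⟨fun a ha => ?_, fun a ha => ?_⟩
  · obtain ⟨q, haq, hq⟩ := exists_rat_btwn ha
    exact (hlow q hq).mono fun n hn => haq.trans hn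
  · obtain ⟨q, hq, hqa⟩ := exists_rat_btwn ha
    exact (hup q hq).mono fun n hn => hn.trans hqa

/-- Birkhoff's pointwise ergodic theorem. -/
theorem Ergodic.ae_tendsto_birkhoffSum_div [IsProbabilityMeasure μ] (hT : Ergodic T μ)
    (hfi : Integrable f μ) :
    ∀ᵐ x ∂μ, Tendsto (fun n : ℕ => birkhoffSum T f n x / n) atTop (𝓝 (∫ x, f x ∂μ)) := by
  have hfg : f =ᵐ[μ] hfi.1.mk f := hfi.1.ae_eq_mk
  have hsum : ∀ᵐ x ∂μ, ∀ n, birkhoffSum T f n x = birkhoffSum T (hfi.1.mk f) n x :=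
    ae_all_iff.2 fun n =>
      hT.toMeasurePreserving.quasiMeasurePreserving.birkhoffSum_ae_eq_of_ae_eq hfg n
  rw [integral_congr_ae hfg]
  filter_upwards [hT.ae_tendsto_birkhoffSum_div_of_measurable
    hfi.1.stronglyMeasurable_mk.measurable (hfi.congr hfg), hsum] with x hx hs
  simpa only [hs] using hx

end Birkhoff

lemma tendsto_sum_range_pow_div_pow_succ (r : ℕ) :
    Tendsto (fun n : ℕ => (∑ i ∈ range n, (i : ℝ) ^ r) / (n : ℝ) ^ (r + 1)) atTop
      (𝓝 (1 / (r + 1))) := by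
  have hmono (n : ℕ) : MonotoneOn (fun x : ℝ => x ^ r) (Set.Icc 0 (0 + n)) :=
    fun x hx y _ hxy => pow_le_pow_left₀ hx.1 hxy r
  have hupper (n : ℕ) : ∑ i ∈ range n, (i : ℝ) ^ r ≤ (n : ℝ) ^ (r + 1) / (r + 1) := by
    simpa [integral_pow] using (hmono n).sum_le_integral
  have hlower (n : ℕ) : (n : ℝ) ^ (r + 1) / (r + 1) - (n : ℝ) ^ r ≤ ∑ i ∈ range n, (i : ℝ) ^ r := by
    have h := (hmono n).integral_le_sum
    have hshift := sum_range_succ' (fun i => (i : ℝ) ^ r) n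
    rw [sum_range_succ] at hshift
    simp only [zero_add, integral_pow, zero_pow r.succ_ne_zero, sub_zero] at h
    push_cast at h hshift
    have : (0 : ℝ) ≤ (0 : ℝ) ^ r := pow_nonneg le_rfl r
    linarith
  have hinv : Tendsto (fun n : ℕ => 1 / (r + 1 : ℝ) - 1 / n) atTop (𝓝 (1 / (r + 1))) := by
    simpa using tendsto_const_nhds.sub (tendsto_const_div_atTop_nhds_zero_nat (1 : ℝ))
  refine tendsto_of_tendsto_of_tendsto_of_le_of_le' hinv tendsto_const_nhds ?_ ?_
  · filter_upwards [eventually_gt_atTop 0] with n hn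
    rw [le_div_iff₀ (by positivity)]
    calc (1 / (r + 1 : ℝ) - 1 / n) * (n : ℝ) ^ (r + 1)
        = (n : ℝ) ^ (r + 1) / (r + 1) - (n : ℝ) ^ r := by field_simp; ring
      _ ≤ _ := hlower n
  · filter_upwards [eventually_gt_atTop 0] with n hn
    rw [div_le_iff₀ (by positivity)]
    calc _ ≤ (n : ℝ) ^ (r + 1) / (r + 1) := hupper n
      _ = 1 / (r + 1) * (n : ℝ) ^ (r + 1) := by ring

lemma isLittleO_sub_mul_of_tendsto_div {ι 𝕜 : Type*} [NormedField 𝕜] {l : Filter ι}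
    {u v : ι → 𝕜} {c : 𝕜} (hv : ∀ᶠ x in l, v x ≠ 0) (h : Tendsto (fun x => u x / v x) l (𝓝 c)) :
    (fun x => u x - c * v x) =o[l] v := by
  refine (isLittleO_iff_tendsto' (hv.mono fun x hx h0 => absurd h0 hx)).2 ?_
  refine (tendsto_sub_nhds_zero_iff.2 h).congr' (hv.mono fun x hx => ?_)
  field_simp

lemma exists_abs_le_mul_add_of_isLittleO {u : ℕ → ℝ} (h : u =o[atTop] fun n => (n : ℝ))
    {ε : ℝ} (hε : 0 < ε) : ∃ M, ∀ n, |u n| ≤ ε * n + M := by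
  obtain ⟨N, hN⟩ := eventually_atTop.1 (h.bound hε)
  refine ⟨∑ i ∈ range N, |u i|, fun n => ?_⟩
  have hM : 0 ≤ ∑ i ∈ range N, |u i| := sum_nonneg fun i _ => abs_nonneg _
  rcases lt_or_ge n N with hn | hn
  · have := single_le_sum (fun i _ => abs_nonneg (u i)) (mem_range.2 hn)
    nlinarith [show (0 : ℝ) ≤ n from n.cast_nonneg]
  · simpa using (hN n hn).trans (le_add_of_nonneg_right hM)

/-- Abel's inequality. -/
lemma abs_sum_range_mul_le_of_monotone {b w : ℕ → ℝ} (hw : Monotone w) (hw0 : 0 ≤ w 0)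
    {R : ℝ} {m : ℕ} (hb : ∀ k ≤ m + 1, |∑ i ∈ range k, b i| ≤ R) :
    |∑ i ∈ range (m + 1), w i * b i| ≤ 2 * R * w m := by
  set B := fun k => ∑ i ∈ range k, b i
  have hwm : 0 ≤ w m := hw0.trans (hw m.zero_le)
  have hR : 0 ≤ R := (abs_nonneg _).trans (hb 0 (m + 1).zero_le)
  have habel : ∑ i ∈ range (m + 1), w i * b i
      = w m * B (m + 1) - ∑ i ∈ range m, (w (i + 1) - w i) * B (i + 1) := by
    simpa only [smul_eq_mul, Nat.add_sub_cancel] using sum_range_by_parts w b (m + 1)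
  have htail : |∑ i ∈ range m, (w (i + 1) - w i) * B (i + 1)| ≤ (w m - w 0) * R :=
    calc |∑ i ∈ range m, (w (i + 1) - w i) * B (i + 1)|
        ≤ ∑ i ∈ range m, (w (i + 1) - w i) * R := by
          refine (abs_sum_le_sum_abs _ _).trans (sum_le_sum fun i hi => ?_)
          have hwi : 0 ≤ w (i + 1) - w i := sub_nonneg.2 (hw i.le_succ)
          rw [abs_mul, abs_of_nonneg hwi]
          exact mul_le_mul_of_nonneg_left (hb _ (by have := mem_range.1 hi; omega)) hwi
      _ = (w m - w 0) * R := by rw [← sum_mul, sum_range_sub w m]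
  have hhead : |w m * B (m + 1)| ≤ w m * R := by
    rw [abs_mul, abs_of_nonneg hwm]
    exact mul_le_mul_of_nonneg_left (hb _ le_rfl) hwm
  rw [habel]
  calc _ ≤ w m * R + (w m - w 0) * R := (abs_sub _ _).trans (add_le_add hhead htail)
    _ ≤ 2 * R * w m := by nlinarith [mul_nonneg hR hw0]

lemma isLittleO_sum_range_mul_of_monotone {b w : ℕ → ℝ}
    (hb : (fun n => ∑ i ∈ range n, b i) =o[atTop] fun n => (n : ℝ)) (hw : Monotone w)
    (hw0 : 0 ≤ w 0) :
    (fun n => ∑ i ∈ range n, w i * b i) =o[atTop] fun n => n * w n := by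
  refine isLittleO_iff.2 fun ε hε => ?_
  obtain ⟨M, hM⟩ := exists_abs_le_mul_add_of_isLittleO hb (by positivity : 0 < ε / 4)
  filter_upwards [eventually_ge_atTop 1, eventually_ge_atTop ⌈4 * M / ε⌉₊] with n hn1 hnM
  obtain ⟨m, rfl⟩ : ∃ m, n = m + 1 := ⟨n - 1, by omega⟩
  have hMε : 4 * M ≤ ε * (m + 1 : ℝ) := by
    have := (div_le_iff₀ hε).1 (Nat.ceil_le.1 hnM)
    push_cast at this
    linarith
  have hwm : w m ≤ w (m + 1) := hw m.le_succ
  have hwm0 : 0 ≤ w m := hw0.trans (hw m.zero_le)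
  have hR : 0 ≤ ε / 4 * (m + 1 : ℝ) + M := by linarith [show 0 ≤ M by simpa using hM 0]
  have h := abs_sum_range_mul_le_of_monotone hw hw0 (R := ε / 4 * (m + 1 : ℝ) + M)
    fun k hk => (hM k).trans (by gcongr; exact_mod_cast hk)
  rw [Real.norm_eq_abs, Real.norm_eq_abs,
    abs_of_nonneg (mul_nonneg (Nat.cast_nonneg _) (hwm0.trans hwm))]
  calc _ ≤ 2 * (ε / 4 * (m + 1 : ℝ) + M) * w m := h
    _ ≤ 2 * (ε / 4 * (m + 1 : ℝ) + M) * w (m + 1) := by gcongr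
    _ ≤ ε * (↑(m + 1) * w (m + 1)) := by push_cast; nlinarith [hwm0.trans hwm]

lemma isLittleO_sum_range_mul_of_isLittleO_pow {b ψ : ℕ → ℝ} {r : ℕ}
    (hb : (fun n => ∑ i ∈ range n, |b i|) =O[atTop] fun n => (n : ℝ))
    (hψ : ψ =o[atTop] fun m => (m : ℝ) ^ r) :
    (fun n => ∑ m ∈ range n, b m * ψ m) =o[atTop] fun n => (n : ℝ) ^ (r + 1) := by
  -- The `+ 1`s make `∑ g` diverge, as `IsLittleO.sum_range` requires.
  set g : ℕ → ℝ := fun m => (|b m| + 1) * ((m : ℝ) + 1) ^ r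
  have hg : 0 ≤ g := fun m => by positivity
  have hbψ : (fun m => b m * ψ m) =o[atTop] g := by
    refine (isBigO_of_le _ fun m => ?_).mul_isLittleO (hψ.trans_le fun m => ?_)
    · rw [Real.norm_eq_abs, Real.norm_of_nonneg (by positivity)]
      linarith
    · simp only [norm_pow, Real.norm_natCast]
      rw [Real.norm_of_nonneg (by positivity)]
      exact pow_le_pow_left₀ m.cast_nonneg (by linarith) r
  have htop : Tendsto (fun n => ∑ m ∈ range n, g m) atTop atTop := by
    refine tendsto_atTop_mono (fun n => ?_) tendsto_natCast_atTop_atTop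
    calc (n : ℝ) = ∑ m ∈ range n, 1 := by simp
      _ ≤ ∑ m ∈ range n, g m := sum_le_sum fun m _ =>
          one_le_mul_of_one_le_of_one_le (by simp) (one_le_pow₀ (by simp))
  obtain ⟨K, hK⟩ := hb.bound
  have hg_le : (fun n => ∑ m ∈ range n, g m) =O[atTop] fun n => (n : ℝ) ^ (r + 1) := by
    refine IsBigO.of_bound (K + 1) ?_
    filter_upwards [hK] with n hn
    rw [Real.norm_of_nonneg (sum_nonneg fun m _ => hg m), norm_pow, Real.norm_natCast]
    rw [Real.norm_of_nonneg (sum_nonneg fun m _ => abs_nonneg _), Real.norm_natCast] at hn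
    calc ∑ m ∈ range n, g m ≤ ∑ m ∈ range n, (|b m| + 1) * (n : ℝ) ^ r :=
          sum_le_sum fun m hm => mul_le_mul_of_nonneg_left (pow_le_pow_left₀ (by positivity)
            (by exact_mod_cast mem_range.1 hm) r) (by positivity)
      _ = (∑ m ∈ range n, |b m| + n) * (n : ℝ) ^ r := by rw [← sum_mul]; simp [sum_add_distrib]
      _ ≤ (K * n + n) * (n : ℝ) ^ r := by gcongr
      _ = (K + 1) * (n : ℝ) ^ (r + 1) := by ring
  exact (hbψ.sum_range hg htop).trans_isBigO hg_le

lemma tendsto_sum_range_mul_div_pow_succ {b φ : ℕ → ℝ} {c C : ℝ} {r : ℕ}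
    (hb : Tendsto (fun n => (∑ i ∈ range n, b i) / n) atTop (𝓝 c))
    (hb_abs : (fun n => ∑ i ∈ range n, |b i|) =O[atTop] fun n => (n : ℝ))
    (hφ : Tendsto (fun m => φ m / (m : ℝ) ^ r) atTop (𝓝 C)) :
    Tendsto (fun n => (∑ m ∈ range n, b m * φ m) / (n : ℝ) ^ (r + 1)) atTop
      (𝓝 (c * C / (r + 1))) := by
  have hne (k : ℕ) : ∀ᶠ n : ℕ in atTop, (n : ℝ) ^ k ≠ 0 :=
    (eventually_gt_atTop 0).mono fun n hn => pow_ne_zero k (Nat.cast_ne_zero.2 hn.ne')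
  have hφ' := isLittleO_sum_range_mul_of_isLittleO_pow hb_abs
    (isLittleO_sub_mul_of_tendsto_div (hne r) hφ)
  have hb' : (fun n => ∑ i ∈ range n, (b i - c)) =o[atTop] fun n => (n : ℝ) := by
    simpa [sum_sub_distrib, mul_comm] using
      isLittleO_sub_mul_of_tendsto_div (by simpa using hne 1) hb
  have hpow : (fun n => ∑ i ∈ range n, (i : ℝ) ^ r * (b i - c)) =o[atTop]
      fun n => (n : ℝ) ^ (r + 1) := by
    simpa [← pow_succ'] using isLittleO_sum_range_mul_of_monotone hb'
      (fun i j hij => pow_le_pow_left₀ i.cast_nonneg (Nat.cast_le.2 hij) r) (by positivity)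
  have hsum (n : ℕ) : ∑ m ∈ range n, b m * φ m = ∑ m ∈ range n, b m * (φ m - C * (m : ℝ) ^ r)
      + C * ∑ m ∈ range n, (m : ℝ) ^ r * (b m - c) + c * C * ∑ m ∈ range n, (m : ℝ) ^ r := by
    rw [mul_sum, mul_sum, ← sum_add_distrib, ← sum_add_distrib]
    exact sum_congr rfl fun m _ => by ring
  have hlim := (hφ'.tendsto_div_nhds_zero.add (hpow.tendsto_div_nhds_zero.const_mul C)).add
    ((tendsto_sum_range_pow_div_pow_succ r).const_mul (c * C))
  rw [mul_zero, add_zero, zero_add, ← mul_div_assoc, mul_one] at hlim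
  refine hlim.congr fun n => ?_
  simp only [hsum, add_div, mul_div_assoc]

theorem Fin.strictMono_snoc_iff {α : Type*} [Preorder α] {r : ℕ} {t : Fin r → α} {m : α} :
    StrictMono (Fin.snoc t m : Fin (r + 1) → α) ↔ StrictMono t ∧ ∀ j, t j < m := by
  constructor
  · intro h
    refine ⟨fun i j hij => ?_, fun j => ?_⟩
    · simpa using h (Fin.castSucc_lt_castSucc_iff.2 hij)
    · simpa using h (Fin.castSucc_lt_last j)
  · rintro ⟨ht, hm⟩ i j hij
    induction j using Fin.lastCases with
    | last =>
      induction i using Fin.lastCases with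
      | last => exact absurd hij (lt_irrefl _)
      | cast i => simpa using hm i
    | cast j =>
      induction i using Fin.lastCases with
      | last => exact absurd hij (not_lt.2 (Fin.castSucc_lt_last j).le)
      | cast i => simpa using ht (Fin.castSucc_lt_castSucc_iff.1 hij)

-- Entries in `ℕ` rather than `Fin n`, so that the tuples below different bounds share one type.
def strictMonoTuples (r n : ℕ) : Finset (Fin r → ℕ) :=
  {s ∈ Fintype.piFinset fun _ => range n | StrictMono s}

lemma mem_strictMonoTuples {r n : ℕ} {s : Fin r → ℕ} :
    s ∈ strictMonoTuples r n ↔ (∀ j, s j < n) ∧ StrictMono s := by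
  simp [strictMonoTuples]

lemma sum_strictMonoTuples_succ {R : Type*} [CommSemiring R] (r n : ℕ)
    (a : Fin (r + 1) → ℕ → R) :
    ∑ s ∈ strictMonoTuples (r + 1) n, ∏ j, a j (s j) =
      ∑ m ∈ range n, a (Fin.last r) m *
        ∑ t ∈ strictMonoTuples r m, ∏ j : Fin r, a j.castSucc (t j) := by
  simp only [mul_sum]
  rw [sum_sigma']
  refine sum_nbij' (fun s => ⟨s (Fin.last r), Fin.init s⟩) (fun x => Fin.snoc x.2 x.1)
    ?_ ?_ (fun s _ => Fin.snoc_init_self s) (fun x _ => by simp) ?_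
  · intro s hs
    rw [mem_strictMonoTuples] at hs
    have h := Fin.strictMono_snoc_iff.1 ((Fin.snoc_init_self s).symm ▸ hs.2)
    exact mem_sigma.2 ⟨mem_range.2 (hs.1 _), mem_strictMonoTuples.2 ⟨h.2, h.1⟩⟩
  · rintro ⟨m, t⟩ hx
    obtain ⟨hm, htm, ht⟩ : m < n ∧ (∀ j, t j < m) ∧ StrictMono t := by
      simpa [mem_strictMonoTuples] using hx
    refine mem_strictMonoTuples.2 ⟨Fin.lastCases (by simpa using hm) fun j => ?_,
      Fin.strictMono_snoc_iff.2 ⟨ht, htm⟩⟩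
    simpa using (htm j).trans hm
  · intro s _
    simp [Fin.prod_univ_castSucc, mul_comm, Fin.init]

lemma sum_filter_strictMono_eq_sum_strictMonoTuples {M : Type*} [AddCommMonoid M] (r n : ℕ)
    (F : (Fin r → ℕ) → M) :
    ∑ s ∈ univ.filter (fun s : Fin r → Fin n => StrictMono s), F (fun j => s j) =
      ∑ s ∈ strictMonoTuples r n, F s := by
  refine sum_bij (fun s _ j => (s j : ℕ)) (fun s hs => ?_) (fun s _ t _ h => ?_) (fun t ht => ?_)
    fun _ _ => rfl
  · exact mem_strictMonoTuples.2 ⟨fun j => (s j).isLt, Fin.val_strictMono.comp (mem_filter.1 hs).2⟩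
  · exact funext fun j => Fin.ext (congr_fun h j)
  · obtain ⟨hlt, hmono⟩ := mem_strictMonoTuples.1 ht
    exact ⟨fun j => ⟨t j, hlt j⟩, mem_filter.2 ⟨mem_univ _, fun i j hij => hmono hij⟩, rfl⟩

open Nat in
theorem tendsto_sum_strictMonoTuples_prod_div_pow {r : ℕ} {a : Fin r → ℕ → ℝ} {c : Fin r → ℝ}
    (hc : ∀ j, Tendsto (fun n => (∑ i ∈ range n, a j i) / n) atTop (𝓝 (c j)))
    (habs : ∀ j, (fun n => ∑ i ∈ range n, |a j i|) =O[atTop] fun n => (n : ℝ)) :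
    Tendsto (fun n => (∑ s ∈ strictMonoTuples r n, ∏ j, a j (s j)) / (n : ℝ) ^ r) atTop
      (𝓝 ((∏ j, c j) / r !)) := by
  induction r with
  | zero => simp [strictMonoTuples, Subsingleton.strictMono]
  | succ r ih =>
    have h := tendsto_sum_range_mul_div_pow_succ (hc (Fin.last r)) (habs _)
      (ih (a := fun j => a j.castSucc) (fun j => hc _) fun j => habs _)
    simp_rw [sum_strictMonoTuples_succ]
    convert h using 2
    rw [Fin.prod_univ_castSucc, factorial_succ]
    push_cast
    field_simp

theorem multiple_birkhoff_general (Y : Type*) [MeasurableSpace Y]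
    (ν : Measure Y) [IsProbabilityMeasure ν] (T : Y → Y) (herg : Ergodic T ν)
    (r : ℕ) (g : Fin r → Y → ℝ) (hg : ∀ j, Integrable (g j) ν) :
    ∀ᵐ y ∂ν,
      Tendsto (fun n : ℕ =>
          (∑ s ∈ Finset.univ.filter (fun s : Fin r → Fin n => StrictMono s),
            ∏ j : Fin r, g j (T^[(s j : ℕ)] y)) / (n : ℝ) ^ r)
        atTop
        (nhds ((1 / (Nat.factorial r : ℝ)) * ∏ j : Fin r, ∫ y, g j y ∂ν)) := by
  filter_upwards [ae_all_iff.2 fun j => herg.ae_tendsto_birkhoffSum_div (hg j),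
    ae_all_iff.2 fun j => herg.ae_tendsto_birkhoffSum_div (hg j).abs] with y hmean habs
  have hbound (j : Fin r) :
      (fun n => ∑ i ∈ range n, |g j (T^[i] y)|) =O[atTop] fun n => (n : ℝ) :=
    isBigO_of_div_tendsto_nhds (Eventually.of_forall fun n hn => by simp [Nat.cast_eq_zero.1 hn])
      _ (habs j)
  rw [one_div_mul_eq_div]
  refine (tendsto_sum_strictMonoTuples_prod_div_pow (a := fun j i => g j (T^[i] y)) hmean
    hbound).congr fun n => ?_
  exact congrArg (· / (n : ℝ) ^ r)
    (sum_filter_strictMono_eq_sum_strictMonoTuples r n fun t => ∏ j, g j (T^[t j] y)).symm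

theorem multiple_birkhoff (Y : Type*) [MeasurableSpace Y]
    (ν : Measure Y) [IsProbabilityMeasure ν] (T : Y → Y) (herg : Ergodic T ν)
    (r : ℕ) (hr : 1 ≤ r) (g : Fin r → Y → ℝ) (hg : ∀ j, Integrable (g j) ν) :
    ∀ᵐ y ∂ν,
      Tendsto (fun n : ℕ =>
          (∑ s ∈ Finset.univ.filter (fun s : Fin r → Fin n => StrictMono s),
            ∏ j : Fin r, g j (T^[(s j : ℕ)] y)) / (n : ℝ) ^ r)
        atTop
        (nhds ((1 / (Nat.factorial r : ℝ)) * ∏ j : Fin r, ∫ y, g j y ∂ν)) :=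
  multiple_birkhoff_general Y ν T herg r g hg
end
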